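/- arXiv:1104.3372 — 6 statements merged into one kernel-verified Lean document; each statement's English description precedes it below -/
import Mathlib

section
/- The n×n Cauchy matrix with (i,j) entry 1/(i+j), for 1 ≤ i,j ≤ n, is positive definite. -/
/-!
With `P = ∑ xᵢ Xⁱ`, the quadratic form of the matrix `(1 / (i + j + k + 1))ᵢⱼ` at `x` is
`∫₀¹ tᵏ P(t)² dt`, because `1 / (i + j + k + 1) = ∫₀¹ tⁱ⁺ʲ⁺ᵏ dt`. For `x ≠ 0` the integrand is a
nonzero polynomial that is nonnegative on `[0, 1]`; having only finitely many roots, it is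
positive on a nonempty open subset of `(0, 1)`, so the integral is positive.
-/

open Polynomial Set MeasureTheory

namespace Polynomial

theorem intervalIntegral_eval_pos {p : ℝ[X]} (hp : p ≠ 0) {a b : ℝ} (hab : a < b)
    (hnonneg : ∀ x ∈ Icc a b, 0 ≤ p.eval x) : 0 < ∫ x in a..b, p.eval x := by
  obtain ⟨x, hx, hpx⟩ := ((Ioo_infinite hab).sdiff (p.finite_setOfPred_isRoot hp)).nonempty
  have hsupp : IsOpen (Function.support (p.eval ·) ∩ Ioo a b) :=
    p.continuous.isOpen_support.inter isOpen_Ioo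
  have hae : ∀ᵐ x ∂volume.restrict (uIoc a b), 0 ≤ p.eval x := by
    rw [uIoc_of_le hab.le]
    exact ae_restrict_of_forall_mem measurableSet_Ioc fun x hx =>
      hnonneg x (Ioc_subset_Icc_self hx)
  rw [intervalIntegral.integral_pos_iff_support_of_nonneg_ae' hae
    (p.continuous.intervalIntegrable a b)]
  refine ⟨hab, (hsupp.measure_pos volume ⟨x, hpx, hx⟩).trans_le ?_⟩
  exact measure_mono (inter_subset_inter_right _ Ioo_subset_Ioc_self)

theorem eval_ofFn {n : ℕ} (v : Fin n → ℝ) (t : ℝ) :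
    (ofFn n v).eval t = ∑ i, v i * t ^ (i : ℕ) := by
  simp [ofFn_eq_sum_monomial, eval_finsetSum]

theorem eval_X_pow_mul_ofFn_sq {n : ℕ} (k : ℕ) (x : Fin n → ℝ) (t : ℝ) :
    (X ^ k * ofFn n x ^ 2).eval t = ∑ i, ∑ j, x i * x j * t ^ (i + j + k : ℕ) := by
  simp only [eval_mul, eval_pow, eval_X, eval_ofFn]
  rw [sq, Finset.sum_mul_sum, Finset.mul_sum]
  refine Finset.sum_congr rfl fun i _ => ?_
  rw [Finset.mul_sum]
  refine Finset.sum_congr rfl fun j _ => ?_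
  rw [pow_add, pow_add]
  ring

end Polynomial

namespace Matrix

/-- Indices are `0`-based: `k = 0` gives the Hilbert matrix, `k = 1` the Cauchy matrix
`(1 / (i + j))` indexed from `1`. -/
noncomputable def shiftedHilbert (n k : ℕ) : Matrix (Fin n) (Fin n) ℝ :=
  of fun i j => 1 / ((i + j + k + 1 : ℕ) : ℝ)

theorem isHermitian_shiftedHilbert (n k : ℕ) : (shiftedHilbert n k).IsHermitian := by
  ext i j
  simp [shiftedHilbert, add_comm]

theorem dotProduct_shiftedHilbert_mulVec {n : ℕ} (k : ℕ) (x : Fin n → ℝ) :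
    star x ⬝ᵥ (shiftedHilbert n k *ᵥ x) = ∫ t in (0 : ℝ)..1, (X ^ k * ofFn n x ^ 2).eval t := by
  have hint (i j : Fin n) :
      IntervalIntegrable (fun t : ℝ => x i * x j * t ^ (i + j + k : ℕ)) volume 0 1 :=
    (continuous_const.mul (continuous_pow _)).intervalIntegrable 0 1
  have hterm (i j : Fin n) : ∫ t in (0 : ℝ)..1, x i * x j * t ^ (i + j + k : ℕ) =
      x i * (shiftedHilbert n k i j * x j) := by
    rw [intervalIntegral.integral_const_mul, integral_pow, one_pow, zero_pow (by omega)]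
    simp only [shiftedHilbert, of_apply]
    push_cast
    ring
  simp_rw [eval_X_pow_mul_ofFn_sq]
  rw [intervalIntegral.integral_finsetSum fun i _ =>
    (by fun_prop : Continuous _).intervalIntegrable 0 1]
  simp_rw [intervalIntegral.integral_finsetSum fun j _ => hint _ j, hterm]
  simp [dotProduct, mulVec, Finset.mul_sum]

theorem posDef_shiftedHilbert (n k : ℕ) : (shiftedHilbert n k).PosDef := by
  refine posDef_iff_dotProduct_mulVec.2 ⟨isHermitian_shiftedHilbert n k, fun x hx => ?_⟩
  rw [dotProduct_shiftedHilbert_mulVec]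
  refine intervalIntegral_eval_pos ?_ zero_lt_one fun t ht => ?_
  · have hP : ofFn n x ≠ 0 := by simpa using (injective_ofFn n).ne hx
    exact mul_ne_zero (pow_ne_zero _ X_ne_zero) (pow_ne_zero _ hP)
  · simp only [eval_mul, eval_pow, eval_X]
    exact mul_nonneg (pow_nonneg ht.1 _) (sq_nonneg _)

end Matrix

/-- The n×n Cauchy matrix with (i,j) entry `1/(i+j)` (1-based indices) is positive definite. -/
theorem cauchy_matrix_posDef (n : ℕ) :
    (Matrix.of fun i j : Fin n =>
      (1 : ℝ) / (((i : ℕ) + 1 + ((j : ℕ) + 1) : ℕ) : ℝ)).PosDef := by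
  convert Matrix.posDef_shiftedHilbert n 1 using 4
  ext i j
  simp only [Matrix.shiftedHilbert, Matrix.of_apply]
  ring_nf
end

section
/- Given an n×n Hermitian matrix B = [b_{ij}], let D be the (n−1)×(n−1) matrix with entries d_{ij} = b_{ij} + b_{i+1,j+1} − b_{i,j+1} − b_{i+1,j}. Then B is conditionally positive definite if and only if D is positive semidefinite. -/
/-!
With `L` the `(n+1)×n` matrix whose `j`-th column is `e_j - e_{j+1}`, the matrix `D` is
`Lᴴ B L`, so `D` is positive semidefinite iff the quadratic form of `B` is nonnegative on the
image of `L`. That image is exactly the hyperplane `∑ xᵢ = 0`: a vector in it is `L y`, where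
`y` is its sequence of partial sums.
-/

open Matrix
open scoped ComplexOrder

def differenceMatrix (R : Type*) [Ring R] (n : ℕ) : Matrix (Fin (n + 1)) (Fin n) R :=
  of fun i j => (if i = j.castSucc then 1 else 0) - (if i = j.succ then 1 else 0)

variable {R : Type*}

theorem differenceMatrix_mulVec [Ring R] {n : ℕ} (y : Fin n → R) :
    differenceMatrix R n *ᵥ y = Fin.snoc y 0 - Fin.cons 0 y := by
  ext i
  simp only [differenceMatrix, mulVec, dotProduct, of_apply, sub_mul, ite_mul, one_mul, zero_mul,
    Finset.sum_sub_distrib, Pi.sub_apply]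
  congr 1
  · induction i using Fin.lastCases <;> simp [Fin.castSucc_inj, eq_comm]
  · induction i using Fin.cases <;> simp [Fin.succ_inj, eq_comm]

theorem conjTranspose_differenceMatrix_mul_mul [Ring R] [StarRing R] {n : ℕ}
    (B : Matrix (Fin (n + 1)) (Fin (n + 1)) R) :
    (differenceMatrix R n)ᴴ * B * differenceMatrix R n = of fun i j : Fin n =>
      B i.castSucc j.castSucc + B i.succ j.succ - B i.castSucc j.succ - B i.succ j.castSucc := by
  ext i j
  simp only [differenceMatrix, mul_apply, conjTranspose_apply, of_apply, star_sub, apply_ite star,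
    star_one, star_zero, sub_mul, ite_mul, one_mul, zero_mul, Finset.sum_sub_distrib,
    Finset.sum_ite_eq', Finset.mem_univ, ↓reduceIte, mul_sub, mul_ite, mul_one, mul_zero]
  abel

theorem sum_differenceMatrix_mulVec [Ring R] {n : ℕ} (y : Fin n → R) :
    ∑ i, (differenceMatrix R n *ᵥ y) i = 0 := by
  rw [differenceMatrix_mulVec]
  simp only [Pi.sub_apply, Finset.sum_sub_distrib]
  rw [Fin.sum_univ_castSucc, Fin.sum_univ_succ]
  simp

theorem Fin.partialSum_last {M : Type*} [AddCommMonoid M] {n : ℕ} (f : Fin n → M) :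
    Fin.partialSum f (Fin.last n) = ∑ i, f i := by
  rw [Fin.partialSum, Fin.val_last, List.take_of_length_le (by simp), List.sum_ofFn]

theorem differenceMatrix_mulVec_partialSum [Ring R] {n : ℕ} {x : Fin (n + 1) → R}
    (hx : ∑ i, x i = 0) :
    differenceMatrix R n *ᵥ (fun j => Fin.partialSum x j.succ.castSucc) = x := by
  have hsnoc : Fin.snoc (fun j : Fin n => Fin.partialSum x j.succ.castSucc) 0 =
      fun i => Fin.partialSum x i.succ := by
    ext i
    induction i using Fin.lastCases with
    | last => rw [Fin.snoc_last, Fin.succ_last, Fin.partialSum_last, hx]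
    | cast j => simp
  have hcons : Fin.cons 0 (fun j : Fin n => Fin.partialSum x j.succ.castSucc) =
      fun i => Fin.partialSum x i.castSucc := by
    ext i
    induction i using Fin.cases <;> simp
  ext i
  rw [differenceMatrix_mulVec, hsnoc, hcons, Pi.sub_apply, Fin.partialSum_succ, add_sub_cancel_left]

theorem range_differenceMatrix_mulVec [Ring R] (n : ℕ) :
    Set.range (differenceMatrix R n *ᵥ ·) = {x | ∑ i, x i = 0} := by
  ext x
  refine ⟨?_, fun hx => ⟨_, differenceMatrix_mulVec_partialSum hx⟩⟩
  rintro ⟨y, rfl⟩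
  exact sum_differenceMatrix_mulVec y

theorem Matrix.posSemidef_conjTranspose_mul_mul_iff {m n : Type*} [Fintype m] [Fintype n]
    [Ring R] [PartialOrder R] [StarRing R] {B : Matrix m m R} (hB : B.IsHermitian)
    (A : Matrix m n R) :
    (Aᴴ * B * A).PosSemidef ↔ ∀ x ∈ Set.range (A *ᵥ ·), 0 ≤ star x ⬝ᵥ B *ᵥ x := by
  simp only [posSemidef_iff_dotProduct_mulVec, isHermitian_conjTranspose_mul_mul A hB, true_and,
    Set.forall_mem_range, ← mulVec_mulVec, star_mulVec, dotProduct_mulVec, vecMul_vecMul]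

/-- For an `(n+1)×(n+1)` Hermitian matrix `B`, let `D` be the `n×n` matrix with entries
`d i j = b i j + b (i+1) (j+1) - b i (j+1) - b (i+1) j`.  Then `B` is conditionally
positive definite (i.e. `(x | Bx) ≥ 0` for all `x` with `∑ xᵢ = 0`) iff `D` is
positive semidefinite. -/
theorem condPosDef_iff_posSemidef (n : ℕ) (B : Matrix (Fin (n + 1)) (Fin (n + 1)) ℂ)
    (hB : B.IsHermitian) :
    (∀ x : Fin (n + 1) → ℂ, ∑ i, x i = 0 → 0 ≤ star x ⬝ᵥ B.mulVec x) ↔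
      (Matrix.of fun i j : Fin n =>
        B i.castSucc j.castSucc + B i.succ j.succ
          - B i.castSucc j.succ - B i.succ j.castSucc).PosSemidef := by
  rw [← conjTranspose_differenceMatrix_mul_mul, posSemidef_conjTranspose_mul_mul_iff hB,
    range_differenceMatrix_mulVec]
  rfl
end

section
/- Let f be a C¹ function on [0, α) with g(t) = f(t)/t. If g is n-monotone on (0, α) and n-convex on (0, α), then f is n-convex on (0, α). -/
/-- First divided difference, with the derivative on the diagonal. -/
noncomputable def dd1 (f : ℝ → ℝ) (s t : ℝ) : ℝ :=
  if s = t then deriv f s else (f s - f t) / (s - t)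

/-- Second divided difference `[r,s,t]_f` (for `r ≠ t`). -/
noncomputable def dd2 (f : ℝ → ℝ) (r s t : ℝ) : ℝ := (dd1 f r s - dd1 f s t) / (r - t)

/-- `n`-monotonicity in the Loewner sense: all `n×n` Loewner matrices at points of `I`
are positive semidefinite. -/
def LoewnerMonotone (g : ℝ → ℝ) (I : Set ℝ) (n : ℕ) : Prop :=
  ∀ t : Fin n → ℝ, (∀ i, t i ∈ I) →
    (Matrix.of fun i j => dd1 g (t i) (t j)).PosSemidef

/-- `n`-convexity in the Kraus sense: all `n×n` Kraus matrices `([z,tᵢ,tⱼ]_f)` at points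
of `I` (with base point `z ∈ I` distinct from the `tᵢ`) are positive semidefinite. -/
def KrausConvex (f : ℝ → ℝ) (I : Set ℝ) (n : ℕ) : Prop :=
  ∀ (z : ℝ) (t : Fin n → ℝ), z ∈ I → (∀ i, t i ∈ I) → z ∉ Set.range t →
    (Matrix.of fun i j => dd2 f z (t i) (t j)).PosSemidef

/-! Writing `f t = t * g t`, the Leibniz rule for divided differences gives
`[z, s, t]_f = z * [z, s, t]_g + [s, t]_g`, so each Kraus matrix of `f` is a nonnegative multiple
of a Kraus matrix of `g` plus a Loewner matrix of `g`, hence positive semidefinite. -/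

section DividedDifference

variable {f f' g : ℝ → ℝ} {U : Set ℝ} {z s t : ℝ}

lemma dd1_congr_of_eqOn (hU : IsOpen U) (h : Set.EqOn f f' U) (hs : s ∈ U) (ht : t ∈ U) :
    dd1 f s t = dd1 f' s t := by
  have hderiv : deriv f s = deriv f' s :=
    Filter.EventuallyEq.deriv_eq (Filter.eventuallyEq_of_mem (hU.mem_nhds hs) h)
  simp only [dd1, hderiv, h hs, h ht]

lemma dd2_congr_of_eqOn (hU : IsOpen U) (h : Set.EqOn f f' U) (hz : z ∈ U) (hs : s ∈ U)
    (ht : t ∈ U) : dd2 f z s t = dd2 f' z s t := by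
  simp only [dd2, dd1_congr_of_eqOn hU h hz hs, dd1_congr_of_eqOn hU h hs ht]

lemma sub_eq_mul_dd1 (g : ℝ → ℝ) (s t : ℝ) : g s - g t = (s - t) * dd1 g s t := by
  rcases eq_or_ne s t with rfl | hst
  · simp
  · simp only [dd1, if_neg hst]
    field_simp [sub_ne_zero.mpr hst]

lemma dd1_id_mul (hg : DifferentiableAt ℝ g s) :
    dd1 (fun u => u * g u) s t = s * dd1 g s t + g t := by
  rcases eq_or_ne s t with rfl | hst
  · rw [dd1, if_pos rfl, dd1, if_pos rfl, ((hasDerivAt_id' s).fun_mul hg.hasDerivAt).deriv]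
    ring
  · simp only [dd1, if_neg hst]
    field_simp [sub_ne_zero.mpr hst]
    ring

lemma dd2_id_mul (hgz : DifferentiableAt ℝ g z) (hgs : DifferentiableAt ℝ g s) (hzt : z ≠ t) :
    dd2 (fun u => u * g u) z s t = z * dd2 g z s t + dd1 g s t := by
  have hslope := sub_eq_mul_dd1 g s t
  simp only [dd2, dd1_id_mul hgz, dd1_id_mul hgs]
  field_simp [sub_ne_zero.mpr hzt]
  linear_combination hslope

end DividedDifference

theorem nConvex_of_nMonotone_nConvex_general (α : ℝ) (n : ℕ) (f g : ℝ → ℝ)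
    (hf : ContDiffOn ℝ 1 f (Set.Ico 0 α))
    (hg : ∀ t ∈ Set.Ioo 0 α, g t = f t / t)
    (hmono : LoewnerMonotone g (Set.Ioo 0 α) n)
    (hconv : KrausConvex g (Set.Ioo 0 α) n) :
    KrausConvex f (Set.Ioo 0 α) n := by
  intro z t hz ht hzt
  have hf_eq : Set.EqOn f (fun u => u * g u) (Set.Ioo 0 α) := fun u hu => by
    change f u = u * g u
    rw [hg u hu]
    field_simp [hu.1.ne']
  have hg_diff : ∀ u ∈ Set.Ioo 0 α, DifferentiableAt ℝ g u := fun u hu => by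
    have hf_diff : DifferentiableAt ℝ f u :=
      (hf.mono Set.Ioo_subset_Ico_self).differentiableOn one_ne_zero |>.differentiableAt
        (isOpen_Ioo.mem_nhds hu)
    exact (hf_diff.div differentiableAt_id hu.1.ne').congr_of_eventuallyEq
      (Filter.eventuallyEq_of_mem (isOpen_Ioo.mem_nhds hu) hg)
  have hkraus : (Matrix.of fun i j => dd2 f z (t i) (t j))
      = z • (Matrix.of fun i j => dd2 g z (t i) (t j))
        + Matrix.of fun i j => dd1 g (t i) (t j) := by
    ext i j
    rw [Matrix.add_apply, Matrix.smul_apply, Matrix.of_apply, Matrix.of_apply, Matrix.of_apply,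
      smul_eq_mul, dd2_congr_of_eqOn isOpen_Ioo hf_eq hz (ht i) (ht j),
      dd2_id_mul (hg_diff z hz) (hg_diff _ (ht i)) fun h => hzt ⟨j, h.symm⟩]
  rw [hkraus]
  exact ((hconv z t hz ht hzt).smul hz.1.le).add (hmono t ht)

/-- If `f` is C¹ on `[0,α)`, `g t = f t / t` is `n`-monotone and `n`-convex on `(0,α)`,
then `f` is `n`-convex on `(0,α)`. -/
theorem nConvex_of_nMonotone_nConvex (α : ℝ) (hα : 0 < α) (n : ℕ) (f g : ℝ → ℝ)
    (hf : ContDiffOn ℝ 1 f (Set.Ico 0 α))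
    (hg : ∀ t ∈ Set.Ioo 0 α, g t = f t / t)
    (hmono : LoewnerMonotone g (Set.Ioo 0 α) n)
    (hconv : KrausConvex g (Set.Ioo 0 α) n) :
    KrausConvex f (Set.Ioo 0 α) n :=
  nConvex_of_nMonotone_nConvex_general α n f g hf hg hmono hconv
end

section
/- There exists β > 0 and a function g that is 2-monotone on (0, β) such that f(t) = t·g(t) is not 2-convex on [0, β); explicitly, g(t) = 1 + t/2 + t²/3 + t³/4 + t⁴/5 works: det M₂(g; t) = 1/72 + t/15 − (77/120)t² − t³ − (4/5)t⁴ > 0 on (0, 0.17], while det K₂(f; t) = 1/72 + t/12 − (23/24)t² − 2t³ − 2t⁴ < 0 at t = 0.15. -/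
/-! Since `g` is a polynomial, both matrices have explicit entries. A real symmetric `2 × 2` matrix
with positive upper-left entry is positive semidefinite as soon as its determinant is nonnegative,
and a positive semidefinite matrix has nonnegative determinant, so everything reduces to the signs
of two explicit determinant polynomials. -/

/-- The Hansen–Tomiyama matrix `K₂(f;t)`, with entries `f^{(i+j)}(t)/(i+j)!`. -/
noncomputable def K2 (f : ℝ → ℝ) (t : ℝ) : Matrix (Fin 2) (Fin 2) ℝ :=
  !![iteratedDeriv 2 f t / 2, iteratedDeriv 3 f t / 6;
     iteratedDeriv 3 f t / 6, iteratedDeriv 4 f t / 24]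

/-- The Loewner–Dobsch matrix `M₂(g;t)`, with entries `g^{(i+j-1)}(t)/(i+j-1)!`. -/
noncomputable def M2 (g : ℝ → ℝ) (t : ℝ) : Matrix (Fin 2) (Fin 2) ℝ :=
  !![deriv g t, iteratedDeriv 2 g t / 2;
     iteratedDeriv 2 g t / 2, iteratedDeriv 3 g t / 6]

open Matrix in
theorem Matrix.posSemidef_fin_two_of_det_nonneg {A : Matrix (Fin 2) (Fin 2) ℝ}
    (hA : A.IsHermitian) (h₀₀ : 0 < A 0 0) (hdet : 0 ≤ A.det) : A.PosSemidef := by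
  refine PosSemidef.of_dotProduct_mulVec_nonneg hA fun x => ?_
  have h₁₀ : A 1 0 = A 0 1 := by simpa using congrFun (congrFun hA 0) 1
  have hquad :
      star x ⬝ᵥ A *ᵥ x = A 0 0 * x 0 ^ 2 + 2 * A 0 1 * x 0 * x 1 + A 1 1 * x 1 ^ 2 := by
    simp [dotProduct, mulVec, Fin.sum_univ_two, h₁₀]
    ring
  rw [det_fin_two, h₁₀] at hdet
  rw [hquad]
  -- `A₀₀ · q(x) = (A₀₀ x₀ + A₀₁ x₁)² + det A · x₁²`
  nlinarith [sq_nonneg (A 0 0 * x 0 + A 0 1 * x 1), mul_nonneg hdet (sq_nonneg (x 1))]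

theorem isHermitian_M2 (g : ℝ → ℝ) (t : ℝ) : (M2 g t).IsHermitian := by
  ext i j
  fin_cases i <;> fin_cases j <;> rfl

namespace TwoMonotoneExample

noncomputable def g : ℝ → ℝ := fun s => 1 + s / 2 + s ^ 2 / 3 + s ^ 3 / 4 + s ^ 4 / 5

noncomputable def f : ℝ → ℝ := fun s => s * g s

theorem deriv_g : deriv g = fun s => 1 / 2 + 2 * s / 3 + 3 * s ^ 2 / 4 + 4 * s ^ 3 / 5 := by
  ext s
  unfold g
  simp (disch := fun_prop) [deriv_fun_add]

theorem iteratedDeriv_two_g : iteratedDeriv 2 g = fun s => 2 / 3 + 3 * s / 2 + 12 * s ^ 2 / 5 := by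
  ext s
  rw [iteratedDeriv_succ, iteratedDeriv_one, deriv_g]
  simp (disch := fun_prop) [deriv_fun_add]
  ring

theorem iteratedDeriv_three_g : iteratedDeriv 3 g = fun s => 3 / 2 + 24 * s / 5 := by
  ext s
  rw [iteratedDeriv_succ, iteratedDeriv_two_g]
  simp (disch := fun_prop) [deriv_fun_add]
  ring

theorem deriv_f : deriv f = fun s => 1 + s + s ^ 2 + s ^ 3 + s ^ 4 := by
  ext s
  unfold f g
  simp (disch := fun_prop) [deriv_fun_add, deriv_fun_mul]
  ring

theorem iteratedDeriv_two_f : iteratedDeriv 2 f = fun s => 1 + 2 * s + 3 * s ^ 2 + 4 * s ^ 3 := by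
  ext s
  rw [iteratedDeriv_succ, iteratedDeriv_one, deriv_f]
  simp (disch := fun_prop) [deriv_fun_add]

theorem iteratedDeriv_three_f : iteratedDeriv 3 f = fun s => 2 + 6 * s + 12 * s ^ 2 := by
  ext s
  rw [iteratedDeriv_succ, iteratedDeriv_two_f]
  simp (disch := fun_prop) [deriv_fun_add]
  ring

theorem iteratedDeriv_four_f : iteratedDeriv 4 f = fun s => 6 + 24 * s := by
  ext s
  rw [iteratedDeriv_succ, iteratedDeriv_three_f]
  simp (disch := fun_prop) [deriv_fun_add]
  ring

theorem M2_g_zero_zero_pos {t : ℝ} (ht : 0 ≤ t) : 0 < M2 g t 0 0 := by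
  change 0 < deriv g t
  rw [deriv_g]
  positivity

theorem det_M2_g (t : ℝ) :
    (M2 g t).det = 1 / 72 + t / 15 - 77 / 120 * t ^ 2 - t ^ 3 - 4 / 5 * t ^ 4 := by
  rw [M2, deriv_g, iteratedDeriv_two_g, iteratedDeriv_three_g, Matrix.det_fin_two_of]
  ring

theorem det_K2_f (t : ℝ) :
    (K2 f t).det = 1 / 72 + t / 12 - 23 / 24 * t ^ 2 - 2 * t ^ 3 - 2 * t ^ 4 := by
  rw [K2, iteratedDeriv_two_f, iteratedDeriv_three_f, iteratedDeriv_four_f, Matrix.det_fin_two_of]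
  ring

theorem det_M2_g_pos {t : ℝ} (ht₀ : 0 ≤ t) (ht₁ : t ≤ 17 / 100) : 0 < (M2 g t).det := by
  rw [det_M2_g]
  nlinarith [mul_le_mul_of_nonneg_left ht₁ ht₀, pow_le_pow_left₀ ht₀ ht₁ 3,
    pow_le_pow_left₀ ht₀ ht₁ 4]

end TwoMonotoneExample

open TwoMonotoneExample in
/-- There is `β > 0` such that `g t = 1 + t/2 + t²/3 + t³/4 + t⁴/5` is 2-monotone on
`(0,β)` (its `M₂` matrices are positive semidefinite there) while `f t = t·g t` is not
2-convex on `[0,β)` (some `K₂(f;t)` fails to be positive semidefinite). -/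
theorem exists_two_monotone_not_product_two_convex :
    ∃ β > (0 : ℝ),
      (∀ t ∈ Set.Ioo (0 : ℝ) β,
        (M2 (fun s => 1 + s / 2 + s ^ 2 / 3 + s ^ 3 / 4 + s ^ 4 / 5) t).PosSemidef) ∧
      ¬ (∀ t ∈ Set.Ico (0 : ℝ) β,
        (K2 (fun s => s * (1 + s / 2 + s ^ 2 / 3 + s ^ 3 / 4 + s ^ 4 / 5)) t).PosSemidef) := by
  refine ⟨17 / 100, by norm_num, fun t ⟨ht₀, ht₁⟩ => ?_, fun hK => ?_⟩
  · exact Matrix.posSemidef_fin_two_of_det_nonneg (isHermitian_M2 g t)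
      (M2_g_zero_zero_pos ht₀.le) (det_M2_g_pos ht₀.le ht₁.le).le
  · have hdet : 0 ≤ (K2 f (3 / 20)).det :=
      (hK (3 / 20) ⟨by norm_num, by norm_num⟩).det_nonneg
    rw [det_K2_f] at hdet
    norm_num at hdet
end

section
/- If f is a C⁴ function on (a, b) that is 2-convex, then f' ∈ Q₂(a, b), i.e., f'' (the derivative of f') is convex on (a, b). -/
/-! The diagonal entry `f⁗(t)/24` of the positive semidefinite matrix `K₂(f; t)` is nonnegative,
and `f⁗` is the second derivative of `f''`. -/

theorem ContDiffOn.differentiableOn_iteratedDeriv_of_isOpen {𝕜 F : Type*}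
    [NontriviallyNormedField 𝕜] [NormedAddCommGroup F] [NormedSpace 𝕜 F] {f : 𝕜 → F}
    {s : Set 𝕜} {n : WithTop ℕ∞} {m : ℕ} (hf : ContDiffOn 𝕜 n f s) (hmn : m < n)
    (hs : IsOpen s) : DifferentiableOn 𝕜 (iteratedDeriv m f) s :=
  (hf.differentiableOn_iteratedDerivWithin hmn hs.uniqueDiffOn).congr fun _ hx =>
    (iteratedDerivWithin_of_isOpen hs hx).symm

theorem ContDiffOn.convexOn_iteratedDeriv {f : ℝ → ℝ} {s : Set ℝ} {k : ℕ} (hs : IsOpen s)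
    (hs' : Convex ℝ s) (hf : ContDiffOn ℝ (k + 2) f s)
    (hnonneg : ∀ x ∈ s, 0 ≤ iteratedDeriv (k + 2) f x) : ConvexOn ℝ s (iteratedDeriv k f) := by
  have hderiv : deriv (iteratedDeriv k f) = iteratedDeriv (k + 1) f := iteratedDeriv_succ.symm
  have hderiv2 : deriv^[2] (iteratedDeriv k f) = iteratedDeriv (k + 2) f := by
    rw [iteratedDeriv_eq_iterate, iteratedDeriv_eq_iterate, ← Function.iterate_add_apply, add_comm]
  refine convexOn_of_deriv2_nonneg' hs'
    (hf.differentiableOn_iteratedDeriv_of_isOpen (by norm_cast; omega) hs) ?_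
    (by rwa [hderiv2])
  rw [hderiv]
  exact hf.differentiableOn_iteratedDeriv_of_isOpen (by norm_cast; omega) hs

/-- If `f` is C⁴ on `(a,b)` and its Hansen–Tomiyama matrices
`K₂(f;t) = [[f''/2, f'''/6],[f'''/6, f''''/24]]` are positive semidefinite on `(a,b)`
(i.e. `f` is 2-convex), then `f'' = (f')'` is convex on `(a,b)`, i.e. `f' ∈ Q₂(a,b)`. -/
theorem deriv_mem_Q2_of_two_convex (a b : ℝ) (f : ℝ → ℝ)
    (hf : ContDiffOn ℝ 4 f (Set.Ioo a b))
    (hconv : ∀ t ∈ Set.Ioo a b,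
      (!![iteratedDeriv 2 f t / 2, iteratedDeriv 3 f t / 6;
          iteratedDeriv 3 f t / 6, iteratedDeriv 4 f t / 24]).PosSemidef) :
    ConvexOn ℝ (Set.Ioo a b) (iteratedDeriv 2 f) := by
  refine ContDiffOn.convexOn_iteratedDeriv (k := 2) isOpen_Ioo (convex_Ioo a b) hf fun t ht => ?_
  have hdiag := (hconv t ht).diag_nonneg (i := 1)
  simp only [Matrix.of_apply, Matrix.cons_val_one, Matrix.cons_val_zero] at hdiag
  linarith
end

section
/- If f is a C⁵ function on an interval and f' is 2-monotone there (i.e., M₂(f'; t) is positive semidefinite for all t), then f is 2-convex (i.e., K₂(f; t) is positive semidefinite for all t), because K₂(f; t) equals the Hadamard product of the positive definite Cauchy matrix (1/(i+j))_{1≤i,j≤2} with M₂(f'; t). -/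
/-!
Shifting the index of `f` by one derivative,
`f^{(i+j)}(t) / (i+j)! = (1 / (i+j)) · (f')^{(i+j-1)}(t) / (i+j-1)!`,
so `K_n(f; t)` is the Hadamard product of the Cauchy matrix `(1 / (i+j))` with `M_n(f'; t)`.
The Cauchy matrix is the Gram matrix `∫₀¹ s · s^{i-1} s^{j-1} ds`, hence positive semidefinite,
and the Schur product theorem concludes.
-/

open Matrix

-- The three matrices below are indexed by `Fin n`: entry `(i, j)` is the paper's `(i + 1, j + 1)`.
noncomputable def cauchyMatrix (n : ℕ) : Matrix (Fin n) (Fin n) ℝ :=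
  of fun i j => 1 / ((i : ℝ) + j + 2)

noncomputable def loewnerMatrix (n : ℕ) (h : ℝ → ℝ) (t : ℝ) : Matrix (Fin n) (Fin n) ℝ :=
  of fun i j => iteratedDeriv (i + j + 1) h t / (i + j + 1 : ℕ).factorial

noncomputable def hansenTomiyamaMatrix (n : ℕ) (f : ℝ → ℝ) (t : ℝ) : Matrix (Fin n) (Fin n) ℝ :=
  of fun i j => iteratedDeriv (i + j + 2) f t / (i + j + 2 : ℕ).factorial

theorem cauchyMatrix_apply_eq_integral {n : ℕ} (i j : Fin n) :
    cauchyMatrix n i j = ∫ s in (0 : ℝ)..1, s ^ ((i : ℕ) + j + 1) := by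
  rw [integral_pow, cauchyMatrix, of_apply]
  push_cast
  ring

theorem dotProduct_cauchyMatrix_mulVec {n : ℕ} (x : Fin n → ℝ) :
    x ⬝ᵥ (cauchyMatrix n *ᵥ x) = ∫ s in (0 : ℝ)..1, s * (∑ i, x i * s ^ (i : ℕ)) ^ 2 := by
  have hexpand : ∀ s : ℝ, ∑ i : Fin n, ∑ j : Fin n, x i * (s ^ ((i : ℕ) + j + 1) * x j) =
      s * (∑ i, x i * s ^ (i : ℕ)) ^ 2 := by
    intro s
    rw [sq, Finset.sum_mul_sum, Finset.mul_sum]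
    refine Finset.sum_congr rfl fun i _ => ?_
    rw [Finset.mul_sum]
    refine Finset.sum_congr rfl fun j _ => ?_
    ring
  calc x ⬝ᵥ (cauchyMatrix n *ᵥ x)
      = ∑ i : Fin n, ∑ j : Fin n, ∫ s in (0 : ℝ)..1, x i * (s ^ ((i : ℕ) + j + 1) * x j) := by
        simp only [dotProduct, mulVec, cauchyMatrix_apply_eq_integral, Finset.mul_sum,
          intervalIntegral.integral_const_mul, intervalIntegral.integral_mul_const]
    _ = ∫ s in (0 : ℝ)..1, ∑ i : Fin n, ∑ j : Fin n, x i * (s ^ ((i : ℕ) + j + 1) * x j) := by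
        rw [intervalIntegral.integral_finsetSum fun i _ => ?_]
        · refine Finset.sum_congr rfl fun i _ => ?_
          rw [intervalIntegral.integral_finsetSum fun j _ =>
            (by fun_prop : Continuous _).intervalIntegrable _ _]
        · exact (by fun_prop : Continuous _).intervalIntegrable _ _
    _ = ∫ s in (0 : ℝ)..1, s * (∑ i, x i * s ^ (i : ℕ)) ^ 2 :=
        intervalIntegral.integral_congr fun s _ => hexpand s

theorem cauchyMatrix_posSemidef (n : ℕ) : (cauchyMatrix n).PosSemidef := by
  rw [posSemidef_iff_dotProduct_mulVec]
  refine ⟨?_, fun x => ?_⟩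
  · ext i j
    simp only [conjTranspose_apply, star_trivial, cauchyMatrix, of_apply]
    ring
  · rw [star_trivial, dotProduct_cauchyMatrix_mulVec]
    exact intervalIntegral.integral_nonneg zero_le_one fun s hs => mul_nonneg hs.1 (sq_nonneg _)

theorem hansenTomiyamaMatrix_eq_cauchyMatrix_hadamard (n : ℕ) (f : ℝ → ℝ) (t : ℝ) :
    hansenTomiyamaMatrix n f t = cauchyMatrix n ⊙ loewnerMatrix n (deriv f) t := by
  ext i j
  simp only [hansenTomiyamaMatrix, cauchyMatrix, loewnerMatrix, hadamard_apply, of_apply,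
    iteratedDeriv_succ' (n := i + j + 1), Nat.factorial_succ (i + j + 1)]
  push_cast
  field_simp
  ring

theorem hansenTomiyamaMatrix_posSemidef {n : ℕ} {f : ℝ → ℝ} {t : ℝ}
    (h : (loewnerMatrix n (deriv f) t).PosSemidef) : (hansenTomiyamaMatrix n f t).PosSemidef := by
  rw [hansenTomiyamaMatrix_eq_cauchyMatrix_hadamard]
  exact (cauchyMatrix_posSemidef n).hadamard h

theorem loewnerMatrix_two_deriv (f : ℝ → ℝ) (t : ℝ) :
    loewnerMatrix 2 (deriv f) t = !![iteratedDeriv 2 f t, iteratedDeriv 3 f t / 2;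
      iteratedDeriv 3 f t / 2, iteratedDeriv 4 f t / 6] := by
  ext i j
  fin_cases i <;> fin_cases j <;>
    norm_num [loewnerMatrix, ← iteratedDeriv_succ', Nat.factorial]

theorem hansenTomiyamaMatrix_two (f : ℝ → ℝ) (t : ℝ) :
    hansenTomiyamaMatrix 2 f t = !![iteratedDeriv 2 f t / 2, iteratedDeriv 3 f t / 6;
      iteratedDeriv 3 f t / 6, iteratedDeriv 4 f t / 24] := by
  ext i j
  fin_cases i <;> fin_cases j <;> norm_num [hansenTomiyamaMatrix, Nat.factorial]

theorem two_convex_of_deriv_two_monotone_general (a b : ℝ) (f : ℝ → ℝ)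
    (hmono : ∀ t ∈ Set.Ioo a b,
      (!![iteratedDeriv 2 f t, iteratedDeriv 3 f t / 2;
          iteratedDeriv 3 f t / 2, iteratedDeriv 4 f t / 6]).PosSemidef) :
    ∀ t ∈ Set.Ioo a b,
      (!![iteratedDeriv 2 f t / 2, iteratedDeriv 3 f t / 6;
          iteratedDeriv 3 f t / 6, iteratedDeriv 4 f t / 24]).PosSemidef := by
  intro t ht
  rw [← hansenTomiyamaMatrix_two]
  apply hansenTomiyamaMatrix_posSemidef
  rw [loewnerMatrix_two_deriv]
  exact hmono t ht

/-- If `f` is C⁵ on `(a,b)` and `f'` is 2-monotone there, i.e. the Loewner–Dobsch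
matrices `M₂(f';t) = [[f'', f'''/2],[f'''/2, f''''/6]]` are positive semidefinite, then
`f` is 2-convex: the Hansen–Tomiyama matrices
`K₂(f;t) = [[f''/2, f'''/6],[f'''/6, f''''/24]]` are positive semidefinite.
(Indeed `K₂(f;t)` is the Hadamard product of the Cauchy matrix `(1/(i+j))` with
`M₂(f';t)`.) -/
theorem two_convex_of_deriv_two_monotone (a b : ℝ) (f : ℝ → ℝ)
    (hf : ContDiffOn ℝ 5 f (Set.Ioo a b))
    (hmono : ∀ t ∈ Set.Ioo a b,
      (!![iteratedDeriv 2 f t, iteratedDeriv 3 f t / 2;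
          iteratedDeriv 3 f t / 2, iteratedDeriv 4 f t / 6]).PosSemidef) :
    ∀ t ∈ Set.Ioo a b,
      (!![iteratedDeriv 2 f t / 2, iteratedDeriv 3 f t / 6;
          iteratedDeriv 3 f t / 6, iteratedDeriv 4 f t / 24]).PosSemidef :=
  two_convex_of_deriv_two_monotone_general a b f hmono
end
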